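/- Let n, m ≥ 1, ℓ ∈ {1,…,n}, k ∈ {1,…,m}, and β ∈ (0,1). Then the β-quantile of the k-th order statistic of m i.i.d. Beta(ℓ, n−ℓ+1) random variables satisfies F_{U_(ℓ:n,k:m)}⁻¹(β) ≥ F_{U_(ℓ:n)}⁻¹( k/(m+1) − sqrt(log(1/β)/(2(m+2))) ). -/

import Mathlib

open MeasureTheory ProbabilityTheory Set

/-- The `r`-th smallest value (order statistic, 1-indexed, ties with multiplicity)
of a finite real vector. -/
noncomputable def orderStat {N : ℕ} (S : Fin N → ℝ) (r : ℕ) : ℝ :=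
  ((Multiset.ofList (List.ofFn S)).sort (· ≤ ·)).getD (r - 1) 0

/-- Product of `N` i.i.d. uniform distributions on `[0,1]`. -/
noncomputable def unifPi (N : ℕ) : Measure (Fin N → ℝ) :=
  Measure.pi fun _ => volume.restrict (Icc (0:ℝ) 1)

/-- The Beta(r, N-r+1) distribution: the law of the `r`-th order statistic of
`N` i.i.d. uniform random variables on `[0,1]`. -/
noncomputable def betaOS (N r : ℕ) : Measure ℝ :=
  Measure.map (fun u => orderStat u r) (unifPi N)

/-- The cdf of the Beta(r, N-r+1) distribution (cdf of `U_(r:N)`). -/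
noncomputable def betaCDF (N r : ℕ) (t : ℝ) : ℝ := (betaOS N r (Iic t)).toReal

/-- Generalized inverse (quantile function) of a cdf. -/
noncomputable def genInv (F : ℝ → ℝ) (p : ℝ) : ℝ := sInf {x | p ≤ F x}

/-- Quantile function of the Beta(r, N-r+1) distribution. -/
noncomputable def betaQuantile (N r : ℕ) (p : ℝ) : ℝ := genInv (betaCDF N r) p

/-- Quantile-of-quantiles: the `k`-th smallest of the `m` within-group `ℓ`-th
order statistics of an `n × m` array. -/
noncomputable def qqStat {n m : ℕ} (ℓ k : ℕ) (Z : Fin n → Fin m → ℝ) : ℝ :=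
  orderStat (fun j => orderStat (fun i => Z i j) ℓ) k

/-- Product of `n × m` i.i.d. uniform distributions on `[0,1]`. -/
noncomputable def unifPi2 (n m : ℕ) : Measure (Fin n → Fin m → ℝ) :=
  Measure.pi fun _ => Measure.pi fun _ => volume.restrict (Icc (0:ℝ) 1)

/-- The law of `U_(ℓ:n, k:m)`, the `k`-th order statistic of the `m` within-group
`ℓ`-th order statistics of an `n × m` array of i.i.d. uniform variables
(equivalently, of `m` i.i.d. Beta(ℓ, n-ℓ+1) variables). -/
noncomputable def betaBetaOS (n m ℓ k : ℕ) : Measure ℝ :=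
  Measure.map (qqStat ℓ k) (unifPi2 n m)

/-- The auxiliary function `g(t) = sup_{δ ∈ (0, min{t,1-t})} (t-δ)/√(log(1/δ))`. -/
noncomputable def gFun (t : ℝ) : ℝ :=
  sSup ((fun δ => (t - δ) / Real.sqrt (Real.log (1/δ))) '' Ioo 0 (min t (1 - t)))

/-- The cdf of the Poisson-Binomial distribution with parameter vector `u`,
evaluated at the integer `r`. -/
noncomputable def pbCDF {m : ℕ} (u : Fin m → ℝ) (r : ℕ) : ℝ :=
  ∑ A ∈ Finset.univ.powerset.filter (fun A : Finset (Fin m) => A.card ≤ r),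
    (∏ j ∈ A, u j) * ∏ j ∈ Aᶜ, (1 - u j)


/-! Below `k/(m+1) - √(log(1/β)/(2(m+2)))`, the event `U_(k:m) ≤ x` says that at least `k` of
`m` independent uniforms fall in `[0, x]`; by Hoeffding's inequality for this binomial count it
has probability at most `exp(-2(k - m x)²/m) < β`, so the `β`-quantile of `U_(k:m)` lies above
that point. The quantile function of `U_(ℓ:n)` is monotone, which transports the bound. -/

open scoped Finset

section GenInv

variable {F : ℝ → ℝ}

lemma genInv_eq_zero_of_nonpos (hF : ∀ x < 0, F x = 0) {p : ℝ} (hp : p ≤ 0) :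
    genInv F p = 0 :=
  Real.sInf_of_not_bddBelow fun ⟨b, hb⟩ ↦
    ((min_le_left _ _).trans_lt (sub_one_lt b)).not_ge
      (hb (show p ≤ F (min (b - 1) (-1)) by rw [hF _ (by simp)]; exact hp))

lemma nonneg_of_pos_le_apply (hF : ∀ x < 0, F x = 0) {p x : ℝ} (hp : 0 < p) (hx : p ≤ F x) :
    0 ≤ x :=
  not_lt.1 fun h ↦ (hF x h ▸ hx).not_gt hp

lemma genInv_nonneg (hF : ∀ x < 0, F x = 0) (p : ℝ) : 0 ≤ genInv F p := by
  rcases le_or_gt p 0 with hp | hp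
  · exact (genInv_eq_zero_of_nonpos hF hp).ge
  · exact Real.sInf_nonneg fun x hx ↦ nonneg_of_pos_le_apply hF hp hx

lemma genInv_le (hF : ∀ x < 0, F x = 0) {p x : ℝ} (hp : 0 < p) (hx : p ≤ F x) :
    genInv F p ≤ x :=
  csInf_le ⟨0, fun _ hy ↦ nonneg_of_pos_le_apply hF hp hy⟩ hx

lemma genInv_mono (hF : ∀ x < 0, F x = 0) {p q : ℝ} (hpq : p ≤ q) (hq : ∃ x, q ≤ F x) :
    genInv F p ≤ genInv F q := by
  rcases le_or_gt p 0 with hp | hp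
  · exact (genInv_eq_zero_of_nonpos hF hp).trans_le (genInv_nonneg hF q)
  · exact csInf_le_csInf ⟨0, fun _ hy ↦ nonneg_of_pos_le_apply hF hp hy⟩ hq
      fun _ hx ↦ hpq.trans hx

end GenInv

theorem List.Pairwise.getElem_le_iff_lt_countP {α : Type*} [LinearOrder α] {l : List α}
    (hl : l.Pairwise (· ≤ ·)) {i : ℕ} (hi : i < l.length) (x : α) :
    l[i] ≤ x ↔ i < l.countP (· ≤ x) := by
  induction l generalizing i with
  | nil => exact absurd hi (Nat.not_lt_zero i)
  | cons a t ih =>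
    obtain ⟨ha_le, ht⟩ := List.pairwise_cons.1 hl
    by_cases ha : a ≤ x
    · rcases i with _ | j
      · simp [ha]
      · simpa [ha] using ih ht (Nat.lt_of_succ_lt_succ hi)
    · have hcount : t.countP (· ≤ x) = 0 :=
        List.countP_eq_zero.2 fun b hb ↦ by simpa using (lt_of_not_ge ha).trans_le (ha_le b hb)
      have hget : a ≤ (a :: t)[i] := by
        rcases List.mem_cons.1 (List.getElem_mem hi) with h | h
        · exact h.ge
        · exact ha_le _ h
      simp only [List.countP_cons, hcount, decide_eq_true_eq, ha, if_false]
      exact iff_of_false (fun h ↦ ha (hget.trans h)) (Nat.not_lt_zero i)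

theorem orderStat_le_iff {N : ℕ} (S : Fin N → ℝ) {r : ℕ} (hr1 : 1 ≤ r) (hrN : r ≤ N) (x : ℝ) :
    orderStat S r ≤ x ↔ r ≤ #{i | S i ≤ x} := by
  set l := (Multiset.ofList (List.ofFn S)).sort (· ≤ ·)
  have hlen : l.length = N := by simp [l]
  have hcount : l.countP (· ≤ x) = #{i | S i ≤ x} := by
    rw [← Multiset.coe_countP, Multiset.sort_eq, ← Fin.univ_val_map, Multiset.countP_map,
      Finset.card_def, Finset.filter_val]
  change l.getD (r - 1) 0 ≤ x ↔ _
  rw [List.getD_eq_getElem _ _ (by omega),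
    (Multiset.pairwise_sort _ _).getElem_le_iff_lt_countP, hcount]
  omega

theorem measurable_orderStat {N r : ℕ} (hr1 : 1 ≤ r) (hrN : r ≤ N) :
    Measurable fun S : Fin N → ℝ ↦ orderStat S r := by
  refine measurable_of_Iic fun x ↦ ?_
  have hcard : Measurable fun S : Fin N → ℝ ↦ #{i | S i ≤ x} := by
    simp only [Finset.card_filter]
    exact Finset.measurable_sum _ fun i _ ↦
      Measurable.ite (measurableSet_le (measurable_pi_apply i) measurable_const)
        measurable_const measurable_const
  convert hcard measurableSet_Ici using 1
  ext S
  exact orderStat_le_iff S hr1 hrN x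

lemma hasSubgaussianMGF_indicator_sub {Ω : Type*} [MeasurableSpace Ω] {μ : Measure Ω}
    [IsProbabilityMeasure μ] {s : Set Ω} (hs : MeasurableSet s) :
    HasSubgaussianMGF (fun ω ↦ s.indicator 1 ω - μ.real s) (1 / 4) μ := by
  have h := hasSubgaussianMGF_of_mem_Icc (X := s.indicator 1) (a := 0) (b := 1)
    ((measurable_const.indicator hs).aemeasurable (μ := μ))
    (ae_of_all _ fun ω ↦ by by_cases h : ω ∈ s <;> simp [h])
  rw [integral_indicator_one hs] at h
  convert h using 1
  ext
  norm_num

lemma pi_real_le_card_mem_le_exp {Ω : Type*} [MeasurableSpace Ω] {μ : Measure Ω}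
    [IsProbabilityMeasure μ] {s : Set Ω} [DecidablePred (· ∈ s)] (hs : MeasurableSet s)
    {m k : ℕ} (hk : m * μ.real s ≤ k) :
    (Measure.pi fun _ : Fin m ↦ μ).real {u : Fin m → Ω | k ≤ #{j | u j ∈ s}}
      ≤ Real.exp (-2 * (k - m * μ.real s) ^ 2 / m) := by
  set p := μ.real s
  have hindep : iIndepFun (fun j (u : Fin m → Ω) ↦ s.indicator 1 (u j) - p)
      (Measure.pi fun _ ↦ μ) :=
    iIndepFun_pi fun _ ↦ ((measurable_const.indicator hs).sub_const p).aemeasurable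
  have hsubG (j : Fin m) (_ : j ∈ Finset.univ) :
      HasSubgaussianMGF (fun u : Fin m → Ω ↦ s.indicator 1 (u j) - p) (1 / 4)
        (Measure.pi fun _ ↦ μ) := by
    refine HasSubgaussianMGF.of_map (Y := fun u : Fin m → Ω ↦ u j)
      (X := fun ω ↦ s.indicator 1 ω - p) (measurable_pi_apply j).aemeasurable ?_
    rw [(measurePreserving_eval (fun _ ↦ μ) j).map_eq]
    exact hasSubgaussianMGF_indicator_sub hs
  have hsum (u : Fin m → Ω) :
      ∑ j, (s.indicator 1 (u j) - p) = #{j | u j ∈ s} - m * p := by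
    simp [Finset.sum_sub_distrib, Set.indicator_apply]
  have hset : {u : Fin m → Ω | k ≤ #{j | u j ∈ s}}
      = {u | k - m * p ≤ ∑ j, (s.indicator 1 (u j) - p)} := by
    ext u
    simp only [Set.mem_ofPred_eq, hsum, sub_le_sub_iff_right, Nat.cast_le]
  rw [hset]
  convert HasSubgaussianMGF.measure_sum_ge_le_of_iIndepFun hindep hsubG (sub_nonneg.2 hk)
    using 2
  simp only [neg_mul, one_div, Finset.sum_const, Finset.card_univ, Fintype.card_fin, nsmul_eq_mul,
    NNReal.coe_mul, NNReal.coe_natCast, NNReal.coe_inv, NNReal.coe_ofNat]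
  ring

instance : IsProbabilityMeasure (volume.restrict (Icc (0 : ℝ) 1)) :=
  ⟨by simp⟩

instance (N : ℕ) : IsProbabilityMeasure (unifPi N) :=
  inferInstanceAs (IsProbabilityMeasure (Measure.pi _))

lemma restrict_Icc_zero_one_real_Iic {x : ℝ} (hx0 : 0 ≤ x) (hx1 : x ≤ 1) :
    (volume.restrict (Icc (0 : ℝ) 1)).real (Iic x) = x := by
  have hinter : Iic x ∩ Icc 0 1 = Icc 0 x := Set.ext fun y ↦
    ⟨fun h ↦ ⟨h.2.1, h.1⟩, fun h ↦ ⟨h.2, h.1, h.2.trans hx1⟩⟩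
  rw [measureReal_restrict_apply measurableSet_Iic, hinter, Real.volume_real_Icc_of_le hx0,
    sub_zero]

lemma ae_unifPi_mem_Icc (N : ℕ) : ∀ᵐ u ∂unifPi N, ∀ i, u i ∈ Icc (0 : ℝ) 1 :=
  ae_all_iff.2 fun _ ↦ Measure.tendsto_eval_ae_ae.eventually (ae_restrict_mem measurableSet_Icc)

section BetaCDF

variable {N r : ℕ}

lemma betaCDF_eq_unifPi_real (hr1 : 1 ≤ r) (hrN : r ≤ N) (x : ℝ) :
    betaCDF N r x = (unifPi N).real {u | r ≤ #{i | u i ≤ x}} := by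
  rw [betaCDF, betaOS, ← measureReal_def, map_measureReal_apply (measurable_orderStat hr1 hrN)
    measurableSet_Iic]
  congr 1
  ext u
  exact orderStat_le_iff u hr1 hrN x

lemma betaCDF_of_neg (hr1 : 1 ≤ r) (hrN : r ≤ N) ⦃x : ℝ⦄ (hx : x < 0) : betaCDF N r x = 0 := by
  rw [betaCDF_eq_unifPi_real hr1 hrN, measureReal_eq_zero_iff, measure_eq_zero_iff_ae_notMem]
  filter_upwards [ae_unifPi_mem_Icc N] with u hu hr
  have : #{i | u i ≤ x} = 0 :=
    Finset.card_eq_zero.2 (Finset.filter_eq_empty_iff.2 fun i _ ↦ (hx.trans_le (hu i).1).not_ge)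
  exact absurd hr (by omega)

lemma betaCDF_one (hr1 : 1 ≤ r) (hrN : r ≤ N) : betaCDF N r 1 = 1 := by
  rw [betaCDF_eq_unifPi_real hr1 hrN, measureReal_congr (ae_eq_univ.2 ?_), probReal_univ]
  rw [measure_eq_zero_iff_ae_notMem]
  filter_upwards [ae_unifPi_mem_Icc N] with u hu hr
  refine hr ?_
  rw [Set.mem_ofPred_eq, Finset.filter_true_of_mem fun i _ ↦ (hu i).2, Finset.card_univ,
    Fintype.card_fin]
  exact hrN

lemma betaCDF_le_exp (hr1 : 1 ≤ r) (hrN : r ≤ N) {x : ℝ} (hx0 : 0 ≤ x) (hx : N * x ≤ r) :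
    betaCDF N r x ≤ Real.exp (-2 * (r - N * x) ^ 2 / N) := by
  have hx1 : x ≤ 1 := by
    have hN : (0 : ℝ) < N := by exact_mod_cast hr1.trans hrN
    have : (N : ℝ) * x ≤ N * 1 := by rw [mul_one]; exact hx.trans (by exact_mod_cast hrN)
    exact le_of_mul_le_mul_left this hN
  have h := pi_real_le_card_mem_le_exp (μ := volume.restrict (Icc (0 : ℝ) 1)) (m := N)
    (measurableSet_Iic (a := x)) (by rwa [restrict_Icc_zero_one_real_Iic hx0 hx1])
  rw [restrict_Icc_zero_one_real_Iic hx0 hx1] at h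
  rw [betaCDF_eq_unifPi_real hr1 hrN]
  exact h

end BetaCDF

lemma lt_two_mul_sq_div_of_lt_sub_sqrt {m k x L : ℝ} (hm : 0 < m) (hx0 : 0 ≤ x) (hL : 0 ≤ L)
    (hx : x < k / (m + 1) - Real.sqrt (L / (2 * (m + 2)))) :
    m * x ≤ k ∧ L < 2 * (k - m * x) ^ 2 / m := by
  set q := k / (m + 1)
  set s := Real.sqrt (L / (2 * (m + 2)))
  have hk : k = (m + 1) * q := by simp only [q]; field_simp
  have hs : L = 2 * (m + 2) * s ^ 2 := by
    simp only [s]; rw [Real.sq_sqrt (by positivity)]; field_simp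
  have hd : s < q - x := by linarith
  have hs0 : 0 ≤ s := Real.sqrt_nonneg _
  -- `k - m x = m (q - x) + q ≥ (m + 1) (q - x)` as `x ≥ 0`, and `(m + 1)² ≥ m (m + 2)`
  have hkx : (m + 1) * (q - x) ≤ k - m * x := by rw [hk]; nlinarith
  have hsq : m * (m + 2) * s ^ 2 < (k - m * x) ^ 2 := calc
    m * (m + 2) * s ^ 2 < m * (m + 2) * (q - x) ^ 2 := by gcongr
    _ ≤ ((m + 1) * (q - x)) ^ 2 := by nlinarith
    _ ≤ (k - m * x) ^ 2 := by gcongr; nlinarith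
  refine ⟨by nlinarith, ?_⟩
  rw [lt_div_iff₀ hm, hs]
  linarith

lemma sub_sqrt_le_betaQuantile {m k : ℕ} (hk1 : 1 ≤ k) (hkm : k ≤ m) {β : ℝ}
    (hβ : β ∈ Ioo (0 : ℝ) 1) :
    (k : ℝ) / ((m : ℝ) + 1) - Real.sqrt (Real.log (1 / β) / (2 * ((m : ℝ) + 2)))
      ≤ betaQuantile m k β := by
  refine le_csInf ⟨1, by rw [mem_ofPred_eq, betaCDF_one hk1 hkm]; exact hβ.2.le⟩ fun x hx ↦ ?_
  by_contra! hlt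
  have hx0 : 0 ≤ x := nonneg_of_pos_le_apply (betaCDF_of_neg hk1 hkm) hβ.1 hx
  have hlog : 0 ≤ Real.log (1 / β) := Real.log_nonneg (by rw [le_div_iff₀ hβ.1]; linarith [hβ.2])
  obtain ⟨hxk, hexp⟩ :=
    lt_two_mul_sq_div_of_lt_sub_sqrt (by exact_mod_cast hk1.trans hkm) hx0 hlog hlt
  have : betaCDF m k x < β := calc
    betaCDF m k x ≤ Real.exp (-2 * (k - m * x) ^ 2 / m) := betaCDF_le_exp hk1 hkm hx0 hxk
    _ < Real.exp (-Real.log (1 / β)) := Real.exp_lt_exp.2 (by rw [neg_mul, neg_div]; linarith)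
    _ = β := by rw [one_div, Real.log_inv, neg_neg, Real.exp_log hβ.1]
  exact this.not_ge hx

-- Since `F_{U_(ℓ:n,k:m)}⁻¹ = F_{U_(ℓ:n)}⁻¹ ∘ F_{U_(k:m)}⁻¹`, the right side is the `β`-quantile
-- of `U_(ℓ:n,k:m)`.
theorem qq_quantile_lower_bound_general (n m : ℕ)
    (ℓ k : ℕ) (hℓ1 : 1 ≤ ℓ) (hℓn : ℓ ≤ n) (hk1 : 1 ≤ k) (hkm : k ≤ m)
    (β : ℝ) (hβ : β ∈ Ioo (0:ℝ) 1) :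
    betaQuantile n ℓ ((k : ℝ) / ((m : ℝ) + 1)
        - Real.sqrt (Real.log (1/β) / (2 * ((m : ℝ) + 2))))
      ≤ betaQuantile n ℓ (betaQuantile m k β) := by
  have hle_one : betaQuantile m k β ≤ 1 :=
    genInv_le (betaCDF_of_neg hk1 hkm) hβ.1 (by rw [betaCDF_one hk1 hkm]; exact hβ.2.le)
  exact genInv_mono (betaCDF_of_neg hℓ1 hℓn) (sub_sqrt_le_betaQuantile hk1 hkm hβ)
    ⟨1, by rw [betaCDF_one hℓ1 hℓn]; exact hle_one⟩

/-- For `β ∈ (0,1)`, the `β`-quantile of the `k`-th order statistic of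
`m` i.i.d. Beta(ℓ, n-ℓ+1) variables, `F_{U_(ℓ:n,k:m)}⁻¹(β) = F_{U_(ℓ:n)}⁻¹(F_{U_(k:m)}⁻¹(β))`,
is at least `F_{U_(ℓ:n)}⁻¹(k/(m+1) - √(log(1/β)/(2(m+2))))`. -/
theorem qq_quantile_lower_bound (n m : ℕ) (hn : 1 ≤ n) (hm : 1 ≤ m)
    (ℓ k : ℕ) (hℓ1 : 1 ≤ ℓ) (hℓn : ℓ ≤ n) (hk1 : 1 ≤ k) (hkm : k ≤ m)
    (β : ℝ) (hβ : β ∈ Ioo (0:ℝ) 1) :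
    betaQuantile n ℓ ((k : ℝ) / ((m : ℝ) + 1)
        - Real.sqrt (Real.log (1/β) / (2 * ((m : ℝ) + 2))))
      ≤ betaQuantile n ℓ (betaQuantile m k β) :=
  qq_quantile_lower_bound_general n m ℓ k hℓ1 hℓn hk1 hkm β hβ
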